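/- Let G be a finite connected multigraph with first Betti number b. Then the number of oriented simple circuits of G is at most 2(2^b − 1). -/
import Mathlib

noncomputable section

/-- A finite connected multigraph with a fixed orientation of each edge. -/
structure Multigraph where
  V : Type
  E : Type
  [finV : Fintype V]
  [finE : Fintype E]
  [decV : DecidableEq V]
  [decE : DecidableEq E]
  src : E → V
  tgt : E → V
  connected : ∀ u v : V, Relation.ReflTransGen
    (fun a b => ∃ e, (src e = a ∧ tgt e = b) ∨ (src e = b ∧ tgt e = a)) u v

attribute [instance] Multigraph.finV Multigraph.finE Multigraph.decV Multigraph.decE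

namespace Multigraph

variable (G : Multigraph)

/-- The simplicial boundary map `∂ : C(G,ℝ) = ℝ^E → ℝ^V`. -/
def boundary : (G.E → ℝ) →ₗ[ℝ] (G.V → ℝ) :=
  LinearMap.pi fun v =>
    ∑ e : G.E, (((if G.tgt e = v then (1 : ℝ) else 0) - (if G.src e = v then 1 else 0)) •
      LinearMap.proj e)

/-- The first real homology of `G`, as the subspace of 1-cycles in `ℝ^E`. -/
def H1 : Submodule ℝ (G.E → ℝ) := LinearMap.ker G.boundary

/-- The weighted ℓ¹-norm on chains; its restriction to `H1` is the stable norm. -/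
def wnorm (w : G.E → ℝ) (u : G.E → ℝ) : ℝ := ∑ e : G.E, w e * |u e|

/-- The stable ball: unit ball of the stable norm in `H_1(G,ℝ)`. -/
def stableBall (w : G.E → ℝ) : Set (G.E → ℝ) :=
  {u | u ∈ G.H1 ∧ G.wnorm w u ≤ 1}

/-- An oriented simple circuit of `G`: a closed oriented edge walk visiting each of its
vertices exactly once (starting point immaterial, encoded by indexing over `ZMod n`). -/
structure Circuit (G : Multigraph) where
  n : ℕ
  npos : 0 < n
  vert : ZMod n → G.V
  edge : ZMod n → G.E
  dir : ZMod n → Bool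
  vertInj : Function.Injective vert
  edgeInj : Function.Injective edge
  incid : ∀ i, (dir i = true ∧ G.src (edge i) = vert i ∧ G.tgt (edge i) = vert (i + 1)) ∨
      (dir i = false ∧ G.src (edge i) = vert (i + 1) ∧ G.tgt (edge i) = vert i)

/-- The 1-chain associated to an oriented simple circuit. -/
def Circuit.chain {G : Multigraph} (C : Circuit G) : G.E → ℝ := fun e =>
  haveI : NeZero C.n := ⟨C.npos.ne'⟩
  ∑ i : ZMod C.n, if C.edge i = e then (if C.dir i then (1 : ℝ) else -1) else 0

/-- The `w`-length of an oriented simple circuit. -/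
def Circuit.wlen {G : Multigraph} (C : Circuit G) (w : G.E → ℝ) : ℝ :=
  haveI : NeZero C.n := ⟨C.npos.ne'⟩
  ∑ i : ZMod C.n, w (C.edge i)

end Multigraph

namespace Multigraph

variable (G : Multigraph)

lemma boundary_apply (u : G.E → ℝ) (v : G.V) :
    G.boundary u v =
      ∑ e : G.E, ((if G.tgt e = v then (1 : ℝ) else 0) - (if G.src e = v then 1 else 0)) * u e := by
  simp [boundary, LinearMap.pi_apply, LinearMap.sum_apply, LinearMap.smul_apply,
    LinearMap.proj_apply, smul_eq_mul]

/-- The mod 2 boundary map. -/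
def bd2 : (G.E → ZMod 2) →ₗ[ZMod 2] (G.V → ZMod 2) :=
  LinearMap.pi fun v =>
    ∑ e : G.E, (((if G.tgt e = v then (1 : ZMod 2) else 0) + (if G.src e = v then 1 else 0)) •
      LinearMap.proj e)

lemma bd2_apply (u : G.E → ZMod 2) (v : G.V) :
    G.bd2 u v =
      ∑ e : G.E, ((if G.tgt e = v then (1 : ZMod 2) else 0) + (if G.src e = v then 1 else 0)) * u e := by
  simp [bd2, LinearMap.pi_apply, LinearMap.sum_apply, LinearMap.smul_apply,
    LinearMap.proj_apply, smul_eq_mul]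

variable {G}

lemma sum_range_eq {M : Type*} [AddCommMonoid M] (C : Circuit G) [NeZero C.n] (φ : G.E → M)
    (hg : ∀ e, e ∉ Set.range C.edge → φ e = 0) :
    ∑ e : G.E, φ e = ∑ i : ZMod C.n, φ (C.edge i) := by
  rw [← Finset.sum_image (s := (Finset.univ : Finset (ZMod C.n))) (g := C.edge) (f := φ)
    (fun i _ j _ h => C.edgeInj h)]
  refine (Finset.sum_subset (Finset.subset_univ _) ?_).symm
  intro e _ he
  refine hg e fun ⟨i, hi⟩ => he (Finset.mem_image.2 ⟨i, Finset.mem_univ _, hi⟩)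

lemma chain_edge (C : Circuit G) [NeZero C.n] (i : ZMod C.n) :
    C.chain (C.edge i) = if C.dir i then 1 else -1 := by
  rw [Circuit.chain]
  rw [Finset.sum_eq_single i]
  · simp
  · intro j _ hj
    rw [if_neg fun h => hj (C.edgeInj h)]
  · intro h; exact absurd (Finset.mem_univ i) h

lemma chain_not_mem (C : Circuit G) [NeZero C.n] {e : G.E} (he : e ∉ Set.range C.edge) :
    C.chain e = 0 := by
  rw [Circuit.chain]
  refine Finset.sum_eq_zero fun i _ => ?_
  rw [if_neg fun h => he ⟨i, h⟩]

lemma chain_ne_zero_iff (C : Circuit G) [NeZero C.n] (e : G.E) :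
    C.chain e ≠ 0 ↔ e ∈ Set.range C.edge := by
  constructor
  · intro h
    by_contra hm
    exact h (chain_not_mem C hm)
  · rintro ⟨i, rfl⟩
    rw [chain_edge]
    split <;> norm_num

lemma chain_mem_ker (C : Circuit G) [NeZero C.n] : G.boundary C.chain = 0 := by
  funext v
  rw [boundary_apply]
  rw [sum_range_eq C _ (fun e he => by rw [chain_not_mem C he, mul_zero])]
  have key : ∀ i : ZMod C.n,
      ((if G.tgt (C.edge i) = v then (1:ℝ) else 0) - (if G.src (C.edge i) = v then 1 else 0)) *
        C.chain (C.edge i)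
      = (if C.vert (i+1) = v then (1:ℝ) else 0) - (if C.vert i = v then 1 else 0) := by
    intro i
    rcases C.incid i with ⟨hd, hs, ht⟩ | ⟨hd, hs, ht⟩ <;>
      rw [chain_edge, hd, hs, ht] <;> simp <;> ring
  rw [Finset.sum_congr rfl fun i _ => key i, Finset.sum_sub_distrib]
  rw [Fintype.sum_equiv (Equiv.addRight (1 : ZMod C.n))
    (fun i => if C.vert (i+1) = v then (1:ℝ) else 0) (fun i => if C.vert i = v then (1:ℝ) else 0)
    (fun i => rfl)]
  simp

/-- mod 2 reduction of a real chain. -/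
def chi (c : G.E → ℝ) : G.E → ZMod 2 := fun e => if c e = 0 then 0 else 1

lemma chi_chain_apply (C : Circuit G) [NeZero C.n] (e : G.E) :
    chi C.chain e = if e ∈ Set.range C.edge then 1 else 0 := by
  rw [chi]
  by_cases h : e ∈ Set.range C.edge
  · rw [if_pos h, if_neg ((chain_ne_zero_iff C e).2 h)]
  · rw [if_neg h, if_pos (by by_contra h'; exact h ((chain_ne_zero_iff C e).1 h'))]

lemma chi_chain_mem_ker (C : Circuit G) [NeZero C.n] : G.bd2 (chi C.chain) = 0 := by
  funext v
  rw [bd2_apply]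
  rw [sum_range_eq C _ (fun e he => by rw [chi_chain_apply, if_neg he, mul_zero])]
  have key : ∀ i : ZMod C.n,
      ((if G.tgt (C.edge i) = v then (1:ZMod 2) else 0) + (if G.src (C.edge i) = v then 1 else 0)) *
        chi C.chain (C.edge i)
      = (if C.vert (i+1) = v then (1:ZMod 2) else 0) + (if C.vert i = v then 1 else 0) := by
    intro i
    rw [chi_chain_apply, if_pos (Set.mem_range_self i), mul_one]
    rcases C.incid i with ⟨hd, hs, ht⟩ | ⟨hd, hs, ht⟩ <;> rw [hs, ht] <;> ring
  rw [Finset.sum_congr rfl fun i _ => key i, Finset.sum_add_distrib]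
  rw [Fintype.sum_equiv (Equiv.addRight (1 : ZMod C.n))
    (fun i => if C.vert (i+1) = v then (1:ZMod 2) else 0)
    (fun i => if C.vert i = v then (1:ZMod 2) else 0) (fun i => rfl)]
  rw [CharTwo.add_self_eq_zero]
  rfl

lemma chi_chain_ne_zero (C : Circuit G) [NeZero C.n] : chi C.chain ≠ 0 := by
  intro h
  have := congrFun h (C.edge 0)
  rw [chi_chain_apply, if_pos ⟨0, rfl⟩] at this
  exact one_ne_zero this

lemma zmod_const {n : ℕ} [NeZero n] (u : ZMod n → ℝ) (h : ∀ i, u (i + 1) = u i)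
    (i j : ZMod n) : u i = u j := by
  have h0 : ∀ k : ℕ, u (k : ZMod n) = u 0 := by
    intro k
    induction k with
    | zero => norm_num
    | succ k ih =>
      have : ((k + 1 : ℕ) : ZMod n) = (k : ZMod n) + 1 := by push_cast; ring
      rw [this, h, ih]
  obtain ⟨a, rfl⟩ := ZMod.natCast_zmod_surjective i
  obtain ⟨b, rfl⟩ := ZMod.natCast_zmod_surjective j
  rw [h0 a, h0 b]

lemma chain_support_unique (C : Circuit G) [NeZero C.n] (z : G.E → ℝ)
    (hz : G.boundary z = 0) (hsupp : ∀ e, e ∉ Set.range C.edge → z e = 0)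
    (i₀ : ZMod C.n) (h0 : z (C.edge i₀) = 0) : z = 0 := by
  have hstep : ∀ i : ZMod C.n,
      (if C.dir (i+1) then (1:ℝ) else -1) * z (C.edge (i+1))
        = (if C.dir i then (1:ℝ) else -1) * z (C.edge i) := by
    intro i
    have hv := congrFun hz (C.vert (i + 1))
    rw [boundary_apply] at hv
    rw [sum_range_eq C _ (fun e he => by rw [hsupp e he, mul_zero])] at hv
    have key : ∀ j : ZMod C.n,
        ((if G.tgt (C.edge j) = C.vert (i+1) then (1:ℝ) else 0)
          - (if G.src (C.edge j) = C.vert (i+1) then 1 else 0)) * z (C.edge j)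
        = ((if C.dir j then (1:ℝ) else -1) * z (C.edge j))
            * ((if j = i then (1:ℝ) else 0) - (if j = i + 1 then 1 else 0)) := by
      intro j
      have e1 : (C.vert (j+1) = C.vert (i+1)) = (j = i) := by
        simp [C.vertInj.eq_iff]
      have e2 : (C.vert j = C.vert (i+1)) = (j = i + 1) := by
        simp [C.vertInj.eq_iff]
      rcases C.incid j with ⟨hd, hs, ht⟩ | ⟨hd, hs, ht⟩ <;>
        simp only [hd, hs, ht, e1, e2] <;> split_ifs <;> (first | ring1 | contradiction)
    rw [Finset.sum_congr rfl fun j _ => key j] at hv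
    have expand : ∑ j : ZMod C.n,
        ((if C.dir j then (1:ℝ) else -1) * z (C.edge j))
          * ((if j = i then (1:ℝ) else 0) - (if j = i + 1 then 1 else 0))
        = (if C.dir i then (1:ℝ) else -1) * z (C.edge i)
          - (if C.dir (i+1) then (1:ℝ) else -1) * z (C.edge (i+1)) := by
      simp [mul_sub, mul_ite, Finset.sum_sub_distrib, Finset.sum_ite_eq']
    rw [expand] at hv
    simp only [Pi.zero_apply] at hv
    linarith
  have hzero : ∀ j, z (C.edge j) = 0 := by
    intro j
    have : (if C.dir j then (1:ℝ) else -1) * z (C.edge j)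
        = (if C.dir i₀ then (1:ℝ) else -1) * z (C.edge i₀) :=
      zmod_const (fun i => (if C.dir i then (1:ℝ) else -1) * z (C.edge i)) hstep j i₀
    rw [h0, mul_zero] at this
    rcases mul_eq_zero.1 this with h | h
    · split at h <;> norm_num at h
    · exact h
  funext e
  by_cases he : e ∈ Set.range C.edge
  · obtain ⟨j, rfl⟩ := he
    exact hzero j
  · exact hsupp e he

section Rank

/-- standard basis vector over `ZMod 2`. -/
def uvec {ι : Type*} [DecidableEq ι] (i : ι) : ι → ZMod 2 := Pi.single i 1

lemma uvec_apply {ι : Type*} [DecidableEq ι] (i j : ι) :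
    uvec i j = if j = i then 1 else 0 := Pi.single_apply i 1 j

variable (G)

/-- Sum-of-coordinates functional on mod 2 vertex chains. -/
def sigma2 : (G.V → ZMod 2) →ₗ[ZMod 2] ZMod 2 := ∑ v : G.V, LinearMap.proj v

lemma sigma2_apply (x : G.V → ZMod 2) : G.sigma2 x = ∑ v : G.V, x v := by
  simp [sigma2, LinearMap.sum_apply, LinearMap.proj_apply]

lemma add_self_vec (x : G.V → ZMod 2) : x + x = 0 := by
  rw [← two_smul (ZMod 2) x, show (2 : ZMod 2) = 0 from rfl, zero_smul]

lemma pair_mem_range (u v : G.V) :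
    uvec u + uvec v ∈ LinearMap.range G.bd2 := by
  induction G.connected u v with
  | refl => rw [add_self_vec]; exact zero_mem _
  | @tail b c hub hr ih =>
    obtain ⟨e, he⟩ := hr
    have hedge : uvec b + uvec c ∈ LinearMap.range G.bd2 := by
      refine ⟨uvec e, ?_⟩
      funext w
      rw [bd2_apply]
      have : ∀ e' : G.E,
          ((if G.tgt e' = w then (1:ZMod 2) else 0) + (if G.src e' = w then 1 else 0)) *
            uvec e e'
          = if e' = e then ((if G.tgt e' = w then (1:ZMod 2) else 0)
              + (if G.src e' = w then 1 else 0)) else 0 := by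
        intro e'
        rw [uvec_apply]
        split <;> simp
      rw [Finset.sum_congr rfl fun e' _ => this e', Finset.sum_ite_eq' Finset.univ e,
        if_pos (Finset.mem_univ e)]
      rcases he with ⟨h1, h2⟩ | ⟨h1, h2⟩ <;> rw [h1, h2] <;>
        simp only [Pi.add_apply, uvec_apply] <;> simp only [eq_comm] <;> ring
    have hsum := add_mem ih hedge
    have : (uvec u + uvec b) + (uvec b + uvec c)
        = (uvec b + uvec b) + (uvec u + uvec c) := by abel
    rw [this, add_self_vec, zero_add] at hsum
    exact hsum

lemma range_bd2 [Nonempty G.V] : LinearMap.range G.bd2 = LinearMap.ker G.sigma2 := by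
  apply le_antisymm
  · rintro _ ⟨u, rfl⟩
    rw [LinearMap.mem_ker, sigma2_apply]
    have : ∀ v : G.V, G.bd2 u v
        = ∑ e : G.E, ((if G.tgt e = v then (1:ZMod 2) else 0)
            + (if G.src e = v then 1 else 0)) * u e := fun v => G.bd2_apply u v
    rw [Finset.sum_congr rfl fun v _ => this v, Finset.sum_comm]
    refine Finset.sum_eq_zero fun e _ => ?_
    rw [← Finset.sum_mul]
    have : ∑ v : G.V, ((if G.tgt e = v then (1:ZMod 2) else 0)
        + (if G.src e = v then 1 else 0)) = 0 := by
      rw [Finset.sum_add_distrib, Finset.sum_ite_eq Finset.univ (G.tgt e) (fun _ => (1:ZMod 2)),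
        Finset.sum_ite_eq Finset.univ (G.src e) (fun _ => (1:ZMod 2))]
      simp
      rfl
    rw [this, zero_mul]
  · intro x hx
    rw [LinearMap.mem_ker, sigma2_apply] at hx
    set v0 : G.V := Classical.arbitrary G.V with hv0
    have hsingle : ∀ v : G.V, Pi.single v (x v) = x v • uvec v := by
      intro v
      funext w
      rw [Pi.smul_apply, Pi.single_apply, uvec_apply]
      split <;> simp
    have hx' : x = ∑ v : G.V, x v • (uvec v + uvec v0) := by
      have expand : ∑ v : G.V, x v • (uvec v + uvec v0)
          = (∑ v : G.V, x v • uvec v) + (∑ v : G.V, x v) • uvec v0 := by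
        rw [Finset.sum_smul]
        rw [← Finset.sum_add_distrib]
        exact Finset.sum_congr rfl fun v _ => by rw [smul_add]
      rw [expand, hx, zero_smul, add_zero]
      rw [Finset.sum_congr rfl fun v _ => (hsingle v).symm, Finset.univ_sum_single]
    rw [hx']
    exact Submodule.sum_mem _ fun v _ => Submodule.smul_mem _ _ (G.pair_mem_range v v0)

lemma finrank_ker_bd2 [Nonempty G.V] :
    Module.finrank (ZMod 2) (LinearMap.ker G.bd2)
      = Fintype.card G.E + 1 - Fintype.card G.V := by
  have hsurj : Function.Surjective G.sigma2 := by
    intro t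
    refine ⟨Pi.single (Classical.arbitrary G.V) t, ?_⟩
    rw [sigma2_apply]
    simp [Pi.single_apply]
  have h1 : Module.finrank (ZMod 2) (LinearMap.range G.sigma2)
      + Module.finrank (ZMod 2) (LinearMap.ker G.sigma2)
      = Module.finrank (ZMod 2) (G.V → ZMod 2) := G.sigma2.finrank_range_add_finrank_ker
  rw [LinearMap.range_eq_top.2 hsurj, finrank_top, Module.finrank_self,
    Module.finrank_pi] at h1
  have h2 : Module.finrank (ZMod 2) (LinearMap.range G.bd2)
      + Module.finrank (ZMod 2) (LinearMap.ker G.bd2)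
      = Module.finrank (ZMod 2) (G.E → ZMod 2) := G.bd2.finrank_range_add_finrank_ker
  rw [G.range_bd2, Module.finrank_pi] at h2
  omega

end Rank

end Multigraph

open Multigraph in
/-- The number of oriented simple circuits of a finite connected multigraph of first Betti
number `b` (circuits differing only by their starting point being identified, i.e. counted
through their associated 1-chains) is at most `2(2^b - 1)`. -/
theorem card_oriented_simple_circuits_le
    (G : Multigraph) (b : ℕ)
    (hb : (b : ℤ) = (Fintype.card G.E : ℤ) - (Fintype.card G.V : ℤ) + 1) :
    {c : G.E → ℝ | ∃ C : Multigraph.Circuit G, c = C.chain}.Finite ∧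
    {c : G.E → ℝ | ∃ C : Multigraph.Circuit G, c = C.chain}.ncard ≤ 2 * (2 ^ b - 1) := by
  classical
  set S := {c : G.E → ℝ | ∃ C : Multigraph.Circuit G, c = C.chain} with hS
  rcases Set.eq_empty_or_nonempty S with hE | hne
  · exact ⟨by rw [hE]; exact Set.finite_empty, by rw [hE]; simp⟩
  obtain ⟨c0, hc0⟩ := hne
  obtain ⟨C0, hc0⟩ := hc0
  haveI : NeZero C0.n := ⟨C0.npos.ne'⟩
  haveI : Nonempty G.V := ⟨C0.vert 0⟩
  haveI : Nonempty G.E := ⟨C0.edge 0⟩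
  haveI : Fintype ↥(LinearMap.ker G.bd2) := Fintype.ofFinite _
  have hbn : Fintype.card ↥(LinearMap.ker G.bd2) = 2 ^ b := by
    have h1 := G.finrank_ker_bd2
    have hcard := Module.card_eq_pow_finrank (K := ZMod 2) (V := ↥(LinearMap.ker G.bd2))
    rw [ZMod.card] at hcard
    have hV : 1 ≤ Fintype.card G.V := Fintype.card_pos
    have hb' : Fintype.card G.E + 1 - Fintype.card G.V = b := by omega
    rw [hcard, h1, hb']
  haveI hneT : Nonempty ({x : ↥(LinearMap.ker G.bd2) // x ≠ 0} × Bool) :=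
    ⟨(⟨⟨chi C0.chain, LinearMap.mem_ker.2 (chi_chain_mem_ker C0)⟩,
      fun hx => chi_chain_ne_zero C0 (congrArg Subtype.val hx)⟩, true)⟩
  set pick : (G.E → ZMod 2) → G.E :=
    fun f => if h : ∃ e, f e ≠ 0 then h.choose else Classical.arbitrary G.E with hpick
  have pick_spec : ∀ f : G.E → ZMod 2, f ≠ 0 → f (pick f) ≠ 0 := by
    intro f hf
    have hex : ∃ e, f e ≠ 0 := by simpa [Function.ne_iff] using hf
    rw [hpick]
    simp only
    rw [dif_pos hex]
    exact hex.choose_spec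
  set F : (G.E → ℝ) → ({x : ↥(LinearMap.ker G.bd2) // x ≠ 0} × Bool) := fun c =>
    if h : G.bd2 (chi c) = 0 ∧ chi c ≠ 0 then
      (⟨⟨chi c, LinearMap.mem_ker.2 h.1⟩, fun hx => h.2 (congrArg Subtype.val hx)⟩,
        decide (0 < c (pick (chi c))))
    else Classical.arbitrary _
    with hF
  have hinj : Set.InjOn F S := by
    rintro c1 hc1 c2 hc2 h
    simp only [hS, Set.mem_setOf_eq] at hc1 hc2
    obtain ⟨C1, rfl⟩ := hc1
    obtain ⟨C2, rfl⟩ := hc2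
    haveI : NeZero C1.n := ⟨C1.npos.ne'⟩
    haveI : NeZero C2.n := ⟨C2.npos.ne'⟩
    have h1 : G.bd2 (chi C1.chain) = 0 ∧ chi C1.chain ≠ 0 :=
      ⟨chi_chain_mem_ker C1, chi_chain_ne_zero C1⟩
    have h2 : G.bd2 (chi C2.chain) = 0 ∧ chi C2.chain ≠ 0 :=
      ⟨chi_chain_mem_ker C2, chi_chain_ne_zero C2⟩
    rw [hF] at h
    simp only at h
    rw [dif_pos h1, dif_pos h2] at h
    have hchi : chi C1.chain = chi C2.chain := by
      have := congrArg (fun p => ((p.1 : {x : ↥(LinearMap.ker G.bd2) // x ≠ 0}) :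
        ↥(LinearMap.ker G.bd2)).val) h
      simpa using this
    have hsign := congrArg Prod.snd h
    simp only at hsign
    rw [← hchi] at hsign
    set e0 := pick (chi C1.chain) with he0def
    have he0 : chi C1.chain e0 ≠ 0 := pick_spec _ h1.2
    have hc1e : C1.chain e0 ≠ 0 := by
      intro hz; apply he0; rw [chi]; simp [hz]
    have hc2e : C2.chain e0 ≠ 0 := by
      intro hz
      apply he0
      rw [hchi, chi]
      simp [hz]
    have hv1 : C1.chain e0 = 1 ∨ C1.chain e0 = -1 := by
      obtain ⟨i, hi⟩ := (chain_ne_zero_iff C1 e0).1 hc1e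
      rw [← hi, chain_edge]
      split
      · exact Or.inl rfl
      · exact Or.inr rfl
    have hv2 : C2.chain e0 = 1 ∨ C2.chain e0 = -1 := by
      obtain ⟨i, hi⟩ := (chain_ne_zero_iff C2 e0).1 hc2e
      rw [← hi, chain_edge]
      split
      · exact Or.inl rfl
      · exact Or.inr rfl
    have hsame : C1.chain e0 = C2.chain e0 := by
      rcases hv1 with hx | hx <;> rcases hv2 with hy | hy <;> rw [hx, hy] at hsign ⊢ <;>
        first
          | rfl
          | (exfalso; norm_num [decide_eq_decide] at hsign)
    have hz : C2.chain - C1.chain = 0 := by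
      obtain ⟨i₀, hi₀⟩ := (chain_ne_zero_iff C1 e0).1 hc1e
      refine chain_support_unique C1 _ ?_ ?_ i₀ ?_
      · rw [map_sub, chain_mem_ker C1, chain_mem_ker C2, sub_zero]
      · intro e he
        have hz1 : C1.chain e = 0 := chain_not_mem C1 he
        have hchi2 : chi C2.chain e = 0 := by rw [← hchi, chi]; simp [hz1]
        have hz2 : C2.chain e = 0 := by
          by_contra hne'
          rw [chi] at hchi2
          simp [hne'] at hchi2
        simp [Pi.sub_apply, hz1, hz2]
      · rw [Pi.sub_apply, hi₀, ← hsame, sub_self]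
    have : C2.chain = C1.chain := by rwa [sub_eq_zero] at hz
    rw [this]
  constructor
  · exact Set.Finite.of_finite_image (Set.toFinite _) hinj
  · have himg := Set.ncard_image_of_injOn hinj
    have hcardβ : Fintype.card ({x : ↥(LinearMap.ker G.bd2) // x ≠ 0} × Bool)
        = 2 * (2 ^ b - 1) := by
      rw [Fintype.card_prod, Fintype.card_bool]
      have hsub : Fintype.card {x : ↥(LinearMap.ker G.bd2) // x ≠ 0}
          = Fintype.card ↥(LinearMap.ker G.bd2) - 1 := by
        have := Fintype.card_subtype_compl (fun x : ↥(LinearMap.ker G.bd2) => x = 0)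
        rw [Fintype.card_subtype_eq (0 : ↥(LinearMap.ker G.bd2))] at this
        exact this
      rw [hsub, hbn, mul_comm]
    calc S.ncard = (F '' S).ncard := himg.symm
      _ ≤ Fintype.card ({x : ↥(LinearMap.ker G.bd2) // x ≠ 0} × Bool) := by
          have := Set.ncard_le_ncard (Set.subset_univ (F '' S)) Set.finite_univ
          rwa [Set.ncard_univ, Nat.card_eq_fintype_card] at this
      _ = 2 * (2 ^ b - 1) := hcardβ
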